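/- arXiv:1604.05930 — 2 statements merged into one kernel-verified Lean document; each statement's English description precedes it below -/
import Mathlib

section
/- Let A : [0,ρ] → ℝ be absolutely continuous on [0,R] with A(0) = 0 and finite energy, and suppose N(A) = 2π∫_0^R r A^2 dr = N_0. Then ∫_0^R r A^4 dr ≤ (N_0/π)(∫_0^R r A_r^2 dr)^{1/2}(∫_0^R A^2/r dr)^{1/2}, and consequently for every ε > 0, ∫_0^R r A^4 dr ≤ ε∫_0^R r A_r^2 dr + (N_0^2/(4επ^2))∫_0^R A^2/r dr. -/
open MeasureTheory Set

/-!
Writing `A(ρ) = ∫₀^ρ A'`, Fubini over the triangle `t < s < ρ` gives `A(ρ)² = 2 ∫₀^ρ A' A`, and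
Cauchy–Schwarz applied to `(√r A') · (A / √r)` bounds this by `2 (∫ r A'²)^{1/2} (∫ A² / r)^{1/2}`.
Multiplying this pointwise bound by `r A(r)²` and integrating gives the first inequality, since
`∫ r A² = N₀ / (2π)`; the second follows from `k a b ≤ ε a² + k² b² / (4ε)`.
-/

theorem sq_integral_eq_two_mul_integral_mul_integral_Iio {μ : Measure ℝ} [SFinite μ]
    [NullSingletonClass μ] {G : ℝ → ℝ} (hG : Integrable G μ) :
    (∫ t, G t ∂μ) ^ 2 = 2 * ∫ s, G s * ∫ t in Iio s, G t ∂μ ∂μ := by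
  set T := {p : ℝ × ℝ | p.2 < p.1}
  have hT : MeasurableSet T := measurableSet_lt measurable_snd measurable_fst
  have hF : Integrable (fun p : ℝ × ℝ => G p.1 * G p.2) (μ.prod μ) := hG.mul_prod hG
  have below : ∫ p in T, G p.1 * G p.2 ∂μ.prod μ = ∫ s, G s * ∫ t in Iio s, G t ∂μ ∂μ := by
    rw [← integral_indicator hT, integral_prod _ (hF.indicator hT)]
    congr 1 with s
    rw [← integral_const_mul, ← integral_indicator measurableSet_Iio]
    congr 1 with t
  have above : ∫ p in Tᶜ, G p.1 * G p.2 ∂μ.prod μ = ∫ s, G s * ∫ t in Iio s, G t ∂μ ∂μ := by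
    rw [← integral_indicator hT.compl, integral_prod_symm _ (hF.indicator hT.compl)]
    congr 1 with t
    rw [← integral_Iic_eq_integral_Iio, ← integral_const_mul,
      ← integral_indicator measurableSet_Iic]
    congr 1 with s
    by_cases h : s ≤ t <;> simp [T, indicator, h, mul_comm]
  rw [sq, ← integral_prod_mul, ← integral_add_compl hT hF, below, above]
  ring

theorem sq_intervalIntegral_eq_two_mul_integral_mul_primitive {g : ℝ → ℝ} {a b : ℝ}
    (hab : a ≤ b) (hg : IntervalIntegrable g volume a b) :
    (∫ t in a..b, g t) ^ 2 = 2 * ∫ s in a..b, g s * ∫ t in a..s, g t := by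
  set G := (Ioc a b).indicator g
  have hprimitive : ∀ s ∈ Ioc a b, ∫ t in Iio s, G t = ∫ t in a..s, g t := by
    intro s hs
    have : Iio s ∩ Ioc a b = Ioo a s := by
      ext t
      simp only [mem_inter_iff, mem_Iio, mem_Ioc, mem_Ioo]
      grind
    rw [setIntegral_indicator measurableSet_Ioc, this, intervalIntegral.integral_of_le hs.1.le,
      integral_Ioc_eq_integral_Ioo]
  calc (∫ t in a..b, g t) ^ 2 = (∫ t, G t) ^ 2 := by
        rw [intervalIntegral.integral_of_le hab, integral_indicator measurableSet_Ioc]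
    _ = 2 * ∫ s, G s * ∫ t in Iio s, G t :=
        sq_integral_eq_two_mul_integral_mul_integral_Iio
          (hg.1.integrable_indicator measurableSet_Ioc)
    _ = 2 * ∫ s in a..b, g s * ∫ t in a..s, g t := by
        rw [intervalIntegral.integral_of_le hab, ← integral_indicator measurableSet_Ioc]
        congr 2 with s
        by_cases hs : s ∈ Ioc a b <;> simp [G, hs, hprimitive]

theorem integral_mul_le_sqrt_mul_sqrt {α : Type*} [MeasurableSpace α] {μ : Measure α}
    {f g : α → ℝ} (hf : MemLp f 2 μ) (hg : MemLp g 2 μ) :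
    ∫ a, f a * g a ∂μ ≤ √(∫ a, f a ^ 2 ∂μ) * √(∫ a, g a ^ 2 ∂μ) := by
  calc ∫ a, f a * g a ∂μ ≤ ∫ a, ‖f a‖ * ‖g a‖ ∂μ := by
        simpa only [abs_mul, Real.norm_eq_abs] using
          (le_abs_self _).trans (abs_integral_le_integral_abs (f := fun a => f a * g a))
    _ ≤ (∫ a, ‖f a‖ ^ (2 : ℝ) ∂μ) ^ (1 / 2 : ℝ) * (∫ a, ‖g a‖ ^ (2 : ℝ) ∂μ) ^ (1 / 2 : ℝ) :=
        integral_mul_norm_le_Lp_mul_Lq Real.HolderConjugate.two_two (by simpa using hf)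
          (by simpa using hg)
    _ = √(∫ a, f a ^ 2 ∂μ) * √(∫ a, g a ^ 2 ∂μ) := by
        simp only [Real.rpow_two, Real.norm_eq_abs, sq_abs, Real.sqrt_eq_rpow, one_div]

theorem sq_primitive_le_two_mul_sqrt_mul_sqrt {f g : ℝ → ℝ} {b : ℝ} (hb : 0 ≤ b)
    (hf : ∀ x ∈ Icc 0 b, f x = ∫ t in 0..x, g t)
    (hg_energy : IntegrableOn (fun r => r * g r ^ 2) (Ioo 0 b))
    (hf_energy : IntegrableOn (fun r => f r ^ 2 / r) (Ioo 0 b)) :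
    f b ^ 2 ≤ 2 * √(∫ r in Ioo 0 b, r * g r ^ 2) * √(∫ r in Ioo 0 b, f r ^ 2 / r) := by
  by_cases hg : IntervalIntegrable g volume 0 b
  swap
  · rw [hf b ⟨hb, le_rfl⟩, intervalIntegral.integral_undef hg, sq, zero_mul]
    positivity
  have hf_cont : ContinuousOn f (Icc 0 b) := by
    have := intervalIntegral.continuousOn_primitive_interval' hg left_mem_uIcc
    rw [uIcc_of_le hb] at this
    exact this.congr hf
  have hg_L2 : MemLp (fun r => √r * g r) 2 (volume.restrict (Ioo 0 b)) := by
    refine (memLp_two_iff_integrable_sq ?_).2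
      (hg_energy.congr_fun (fun r hr => ?_) measurableSet_Ioo)
    · exact Real.continuous_sqrt.aestronglyMeasurable.mul
        (hg.1.mono_set Ioo_subset_Ioc_self).aestronglyMeasurable
    · rw [mul_pow, Real.sq_sqrt hr.1.le]
  have hf_L2 : MemLp (fun r => f r / √r) 2 (volume.restrict (Ioo 0 b)) := by
    refine (memLp_two_iff_integrable_sq ?_).2
      (hf_energy.congr_fun (fun r hr => ?_) measurableSet_Ioo)
    · exact ((hf_cont.mono Ioo_subset_Icc_self).aestronglyMeasurable measurableSet_Ioo).div₀
        Real.continuous_sqrt.aestronglyMeasurable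
    · rw [div_pow, Real.sq_sqrt hr.1.le]
  calc f b ^ 2 = 2 * ∫ s in 0..b, g s * f s := by
        rw [hf b ⟨hb, le_rfl⟩, sq_intervalIntegral_eq_two_mul_integral_mul_primitive hb hg]
        congr 1
        refine intervalIntegral.integral_congr fun s hs => ?_
        rw [uIcc_of_le hb] at hs
        simp only [hf s hs]
    _ = 2 * ∫ s in Ioo 0 b, (√s * g s) * (f s / √s) := by
        rw [intervalIntegral.integral_of_le hb, integral_Ioc_eq_integral_Ioo]
        congr 1
        refine setIntegral_congr_fun measurableSet_Ioo fun s hs => ?_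
        have : √s ≠ 0 := (Real.sqrt_pos.2 hs.1).ne'
        field_simp
    _ ≤ 2 * (√(∫ s in Ioo 0 b, (√s * g s) ^ 2) * √(∫ s in Ioo 0 b, (f s / √s) ^ 2)) := by
        gcongr
        exact integral_mul_le_sqrt_mul_sqrt hg_L2 hf_L2
    _ = 2 * √(∫ r in Ioo 0 b, r * g r ^ 2) * √(∫ r in Ioo 0 b, f r ^ 2 / r) := by
        rw [mul_assoc]
        congr 3
        · exact setIntegral_congr_fun measurableSet_Ioo fun s hs => by
            rw [mul_pow, Real.sq_sqrt hs.1.le]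
        · exact setIntegral_congr_fun measurableSet_Ioo fun s hs => by
            rw [div_pow, Real.sq_sqrt hs.1.le]

theorem sq_le_two_mul_sqrt_mul_sqrt_of_mem_Icc {f g : ℝ → ℝ} {R ρ : ℝ} (hρ : ρ ∈ Icc 0 R)
    (hf : ∀ x ∈ Icc 0 R, f x = ∫ t in 0..x, g t)
    (hg_energy : IntegrableOn (fun r => r * g r ^ 2) (Ioo 0 R))
    (hf_energy : IntegrableOn (fun r => f r ^ 2 / r) (Ioo 0 R)) :
    f ρ ^ 2 ≤ 2 * √(∫ r in Ioo 0 R, r * g r ^ 2) * √(∫ r in Ioo 0 R, f r ^ 2 / r) := by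
  have hsub : Ioo 0 ρ ⊆ Ioo 0 R := Ioo_subset_Ioo_right hρ.2
  refine (sq_primitive_le_two_mul_sqrt_mul_sqrt hρ.1
    (fun x hx => hf x ⟨hx.1, hx.2.trans hρ.2⟩) (hg_energy.mono_set hsub)
    (hf_energy.mono_set hsub)).trans ?_
  gcongr <;>
    exact ae_restrict_of_forall_mem measurableSet_Ioo fun r hr => by positivity [hr.1]

theorem mul_mul_le_mul_sq_add_sq_div_mul_sq (k a b : ℝ) {ε : ℝ} (hε : 0 < ε) :
    k * a * b ≤ ε * a ^ 2 + k ^ 2 / (4 * ε) * b ^ 2 := by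
  have : 0 ≤ (2 * ε * a - k * b) ^ 2 / (4 * ε) := by positivity
  have h : (2 * ε * a - k * b) ^ 2 / (4 * ε)
      = ε * a ^ 2 + k ^ 2 / (4 * ε) * b ^ 2 - k * a * b := by
    field_simp
    ring
  linarith

theorem integrableOn_mul_sq_of_integrableOn_sq_div {A : ℝ → ℝ} {R : ℝ}
    (hA : IntegrableOn (fun r => A r ^ 2 / r) (Ioo 0 R)) :
    IntegrableOn (fun r => r * A r ^ 2) (Ioo 0 R) := by
  refine (hA.continuousOn_mul_of_subset (continuous_pow 2).continuousOn isCompact_Icc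
    measurableSet_Ioo Ioo_subset_Icc_self).congr_fun (fun r hr => ?_) measurableSet_Ioo
  field_simp [hr.1.ne']

theorem quartic_integral_bound_general (R N0 : ℝ) (A : ℝ → ℝ)
    (hAC : ∀ ρ ∈ Icc (0 : ℝ) R, A ρ = ∫ t in (0 : ℝ)..ρ, deriv A t)
    (hE1 : IntegrableOn (fun r => r * (deriv A r) ^ 2) (Ioo 0 R))
    (hE2 : IntegrableOn (fun r => (A r) ^ 2 / r) (Ioo 0 R))
    (hN : 2 * Real.pi * (∫ r in Ioo (0 : ℝ) R, r * (A r) ^ 2) = N0) :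
    (∫ r in Ioo (0 : ℝ) R, r * (A r) ^ 4)
      ≤ (N0 / Real.pi) * Real.sqrt (∫ r in Ioo (0 : ℝ) R, r * (deriv A r) ^ 2) *
          Real.sqrt (∫ r in Ioo (0 : ℝ) R, (A r) ^ 2 / r) ∧
    ∀ ε : ℝ, 0 < ε →
      (∫ r in Ioo (0 : ℝ) R, r * (A r) ^ 4)
        ≤ ε * (∫ r in Ioo (0 : ℝ) R, r * (deriv A r) ^ 2)
          + (N0 ^ 2 / (4 * ε * Real.pi ^ 2)) * ∫ r in Ioo (0 : ℝ) R, (A r) ^ 2 / r := by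
  set E1 := ∫ r in Ioo (0 : ℝ) R, r * (deriv A r) ^ 2
  set E2 := ∫ r in Ioo (0 : ℝ) R, (A r) ^ 2 / r
  have first : ∫ r in Ioo 0 R, r * A r ^ 4 ≤ N0 / Real.pi * √E1 * √E2 := by
    calc ∫ r in Ioo 0 R, r * A r ^ 4 ≤ ∫ r in Ioo 0 R, 2 * √E1 * √E2 * (r * A r ^ 2) := by
          refine integral_mono_of_nonneg
            (ae_restrict_of_forall_mem measurableSet_Ioo fun r hr => by positivity [hr.1])
            ((integrableOn_mul_sq_of_integrableOn_sq_div hE2).const_mul _)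
            (ae_restrict_of_forall_mem measurableSet_Ioo fun r hr => ?_)
          have hA := sq_le_two_mul_sqrt_mul_sqrt_of_mem_Icc (Ioo_subset_Icc_self hr) hAC hE1 hE2
          nlinarith [mul_le_mul_of_nonneg_right hA (mul_nonneg hr.1.le (sq_nonneg (A r)))]
      _ = N0 / Real.pi * √E1 * √E2 := by
          rw [integral_const_mul, ← hN]
          field_simp
  have hE1_nonneg : 0 ≤ E1 := setIntegral_nonneg measurableSet_Ioo fun r hr => by positivity [hr.1]
  have hE2_nonneg : 0 ≤ E2 := setIntegral_nonneg measurableSet_Ioo fun r hr => by positivity [hr.1]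
  refine ⟨first, fun ε hε => first.trans ?_⟩
  have hamgm := mul_mul_le_mul_sq_add_sq_div_mul_sq (N0 / Real.pi) √E1 √E2 hε
  rwa [Real.sq_sqrt hE1_nonneg, Real.sq_sqrt hE2_nonneg, div_pow, div_div,
    mul_comm (Real.pi ^ 2)] at hamgm

theorem quartic_integral_bound (R N0 : ℝ) (A : ℝ → ℝ)
    (hR : 0 < R)
    (hAC : ∀ ρ ∈ Icc (0 : ℝ) R, A ρ = ∫ t in (0 : ℝ)..ρ, deriv A t)
    (hE1 : IntegrableOn (fun r => r * (deriv A r) ^ 2) (Ioo 0 R))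
    (hE2 : IntegrableOn (fun r => (A r) ^ 2 / r) (Ioo 0 R))
    (hE4 : IntegrableOn (fun r => r * (A r) ^ 4) (Ioo 0 R))
    (hN : 2 * Real.pi * (∫ r in Ioo (0 : ℝ) R, r * (A r) ^ 2) = N0) :
    (∫ r in Ioo (0 : ℝ) R, r * (A r) ^ 4)
      ≤ (N0 / Real.pi) * Real.sqrt (∫ r in Ioo (0 : ℝ) R, r * (deriv A r) ^ 2) *
          Real.sqrt (∫ r in Ioo (0 : ℝ) R, (A r) ^ 2 / r) ∧
    ∀ ε : ℝ, 0 < ε →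
      (∫ r in Ioo (0 : ℝ) R, r * (A r) ^ 4)
        ≤ ε * (∫ r in Ioo (0 : ℝ) R, r * (deriv A r) ^ 2)
          + (N0 ^ 2 / (4 * ε * Real.pi ^ 2)) * ∫ r in Ioo (0 : ℝ) R, (A r) ^ 2 / r :=
  quartic_integral_bound_general R N0 A hAC hE1 hE2 hN
end

section
/- Let a, b > 0, R = 2a, m ∈ ℤ, and let A_0 be the tent function A_0(r) = (b/a)r on [0,a], A_0(r) = (b/a)(2a-r) on [a,2a]. Then the constrained functional J(A_0) = (1/2)∫_0^R [r A_{0,r}^2 + (m^2/r)A_0^2 - r ln(1+A_0^2) + r A_0^2/(1+A_0^2)] dr equals (R^2/4)(3 - (3/b)arctan(b) - ln(1+b^2) + (4b^2/R^2)(1 + m^2(2 ln 2 - 1))). -/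
/-!
On each half of the tent `A₀` is linear with slope `±b/a`, so `r A₀'² = (b/a)² r` off the
peak. The reflection `r ↦ 2a - r` carries the descending half onto the ascending one, hence
`∫₀^{2a} r f(A₀ r) dr = 2a ∫₀^a f((b/a) s) ds` for every continuous `f`. Taking
`f x = x²/(1+x²) - log(1+x²)` and rescaling to `[0, b]` gives the arctan and log terms through
the antiderivative `3t - 3 arctan t - t log(1+t²)`. The term `m² A₀²/r` is not of this form and
is integrated directly; its `log 2` comes from `∫ₐ^{2a} (2a-r)²/r dr`.
-/

open MeasureTheory Set intervalIntegral

noncomputable def tent (c a r : ℝ) : ℝ := if r ≤ a then c * r else c * (2 * a - r)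

namespace tent

variable {c a r : ℝ}

theorem eq_of_le (h : r ≤ a) : tent c a r = c * r := if_pos h

theorem eq_of_ge (h : a ≤ r) : tent c a r = c * (2 * a - r) := by
  rcases h.lt_or_eq with h | rfl
  · exact if_neg h.not_ge
  · rw [eq_of_le le_rfl]; ring

@[fun_prop]
theorem continuous : Continuous (tent c a) :=
  continuous_if_le continuous_id continuous_const (by fun_prop) (by fun_prop)
    fun r hr => by rw [hr]; ring

theorem hasDerivAt_of_lt (h : r < a) : HasDerivAt (tent c a) c r := by
  have : tent c a =ᶠ[nhds r] fun s => c * s :=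
    Filter.eventually_of_mem (Iio_mem_nhds h) fun s hs => eq_of_le (le_of_lt hs)
  exact ((hasDerivAt_id r).const_mul c).congr_of_eventuallyEq this |>.congr_deriv (mul_one c)

theorem hasDerivAt_of_gt (h : a < r) : HasDerivAt (tent c a) (-c) r := by
  have : tent c a =ᶠ[nhds r] fun s => c * (2 * a - s) :=
    Filter.eventually_of_mem (Ioi_mem_nhds h) fun s hs => eq_of_ge (le_of_lt hs)
  exact (((hasDerivAt_id r).const_sub (2 * a)).const_mul c).congr_of_eventuallyEq this
    |>.congr_deriv (by ring)

theorem deriv_sq (h : r ≠ a) : deriv (tent c a) r ^ 2 = c ^ 2 := by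
  rcases h.lt_or_gt with h | h
  · rw [(hasDerivAt_of_lt h).deriv]
  · rw [(hasDerivAt_of_gt h).deriv, neg_sq]

end tent

theorem integral_mul_comp_tent {f : ℝ → ℝ} (hf : Continuous f) (c : ℝ) {a : ℝ}
    (ha : 0 ≤ a) :
    ∫ r in 0..2 * a, r * f (tent c a r) = 2 * a * ∫ s in 0..a, f (c * s) := by
  have hcont : Continuous fun r => r * f (tent c a r) := by fun_prop
  have hleft : ∫ r in 0..a, r * f (tent c a r) = ∫ s in 0..a, s * f (c * s) :=
    integral_congr fun r hr => by
      rw [uIcc_of_le ha] at hr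
      simp only [tent.eq_of_le hr.2]
  have hright : ∫ r in a..2 * a, r * f (tent c a r) = ∫ s in 0..a, (2 * a - s) * f (c * s) := by
    have := integral_comp_sub_left (fun s => (2 * a - s) * f (c * s)) (a := a) (b := 2 * a) (2 * a)
    simp only [sub_self, sub_sub_cancel, show 2 * a - a = a by ring] at this
    rw [← this]
    refine integral_congr fun r hr => ?_
    rw [uIcc_of_le (by linarith)] at hr
    simp only [tent.eq_of_ge hr.1]
  rw [← integral_add_adjacent_intervals (hcont.intervalIntegrable 0 a)
    (hcont.intervalIntegrable a (2 * a)), hleft, hright, ← intervalIntegral.integral_add,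
    ← intervalIntegral.integral_const_mul]
  · congr 1; ext s; ring
  all_goals exact Continuous.intervalIntegrable (by fun_prop) _ _

theorem integral_sq_div_one_add_sq_sub_log (b : ℝ) :
    ∫ t in 0..b, (t ^ 2 / (1 + t ^ 2) - Real.log (1 + t ^ 2))
      = 3 * b - 3 * Real.arctan b - b * Real.log (1 + b ^ 2) := by
  have hderiv (t : ℝ) : HasDerivAt (fun t => 3 * t - 3 * Real.arctan t - t * Real.log (1 + t ^ 2))
      (t ^ 2 / (1 + t ^ 2) - Real.log (1 + t ^ 2)) t := by
    have hpos : 0 < 1 + t ^ 2 := by positivity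
    have hlog := ((hasDerivAt_pow 2 t).const_add 1).log hpos.ne'
    refine ((((hasDerivAt_id' t).const_mul 3).sub ((Real.hasDerivAt_arctan t).const_mul 3)).sub
      ((hasDerivAt_id' t).mul hlog)).congr_deriv ?_
    field_simp
    norm_num
    ring
  rw [integral_eq_sub_of_hasDerivAt (fun t _ => hderiv t)
    (Continuous.intervalIntegrable (by fun_prop (disch := intro; positivity)) _ _)]
  simp

theorem tent_sq_div_eqOn_Iic (c a : ℝ) :
    EqOn (fun r => tent c a r ^ 2 / r) (fun r => c ^ 2 * r) (Iic a) := by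
  intro r hr
  rcases eq_or_ne r 0 with rfl | hr0
  · simp
  · simp only [tent.eq_of_le (mem_Iic.mp hr)]
    field_simp

theorem intervalIntegrable_tent_sq_div_left (c : ℝ) {a : ℝ} (ha : 0 ≤ a) :
    IntervalIntegrable (fun r => tent c a r ^ 2 / r) volume 0 a := by
  refine ((continuous_const_mul (c ^ 2)).continuousOn.congr ?_).intervalIntegrable
  exact (tent_sq_div_eqOn_Iic c a).mono (by rw [uIcc_of_le ha]; exact Icc_subset_Iic_self)

theorem intervalIntegrable_tent_sq_div_right (c : ℝ) {a : ℝ} (ha : 0 < a) :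
    IntervalIntegrable (fun r => tent c a r ^ 2 / r) volume a (2 * a) := by
  refine ContinuousOn.intervalIntegrable ?_
  rw [uIcc_of_le (by linarith)]
  exact ((tent.continuous.pow 2).continuousOn.div continuousOn_id
    fun r hr => (ha.trans_le hr.1).ne')

theorem intervalIntegrable_tent_sq_div (c : ℝ) {a : ℝ} (ha : 0 < a) :
    IntervalIntegrable (fun r => tent c a r ^ 2 / r) volume 0 (2 * a) :=
  (intervalIntegrable_tent_sq_div_left c ha.le).trans (intervalIntegrable_tent_sq_div_right c ha)

theorem integral_tent_sq_div (c : ℝ) {a : ℝ} (ha : 0 < a) :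
    ∫ r in 0..2 * a, tent c a r ^ 2 / r = 2 * c ^ 2 * a ^ 2 * (2 * Real.log 2 - 1) := by
  have hleft : ∫ r in 0..a, tent c a r ^ 2 / r = c ^ 2 * a ^ 2 / 2 := by
    have hmono : uIcc 0 a ⊆ Iic a := by rw [uIcc_of_le ha.le]; exact Icc_subset_Iic_self
    rw [integral_congr ((tent_sq_div_eqOn_Iic c a).mono hmono), intervalIntegral.integral_const_mul,
      integral_id]
    ring
  have hright : ∫ r in a..2 * a, tent c a r ^ 2 / r
      = c ^ 2 * (4 * a ^ 2 * Real.log 2 - 5 / 2 * a ^ 2) := by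
    have hderiv : ∀ r ∈ uIcc a (2 * a), HasDerivAt
        (fun r => c ^ 2 * (4 * a ^ 2 * Real.log r - 4 * a * r + r ^ 2 / 2))
        (tent c a r ^ 2 / r) r := by
      intro r hr
      rw [uIcc_of_le (by linarith)] at hr
      have hr0 : r ≠ 0 := (ha.trans_le hr.1).ne'
      refine ((((Real.hasDerivAt_log hr0).const_mul _).sub ((hasDerivAt_id' r).const_mul _)).add
        ((hasDerivAt_pow 2 r).div_const 2)).const_mul _ |>.congr_deriv ?_
      rw [tent.eq_of_ge hr.1]
      field_simp
      ring
    rw [integral_eq_sub_of_hasDerivAt hderiv (intervalIntegrable_tent_sq_div_right c ha),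
      Real.log_mul two_ne_zero ha.ne']
    ring
  rw [← integral_add_adjacent_intervals (intervalIntegrable_tent_sq_div_left c ha.le)
    (intervalIntegrable_tent_sq_div_right c ha), hleft, hright]
  ring

theorem tent_J_value (a b : ℝ) (m : ℤ) (ha : 0 < a) (hb : 0 < b)
    (A0 : ℝ → ℝ)
    (hA0 : ∀ r : ℝ, A0 r = if r ≤ a then (b / a) * r else (b / a) * (2 * a - r)) :
    (1 / 2) * (∫ r in Ioo (0 : ℝ) (2 * a),
        (r * (deriv A0 r) ^ 2 + ((m : ℝ) ^ 2 / r) * (A0 r) ^ 2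
          - r * Real.log (1 + (A0 r) ^ 2) + r * (A0 r) ^ 2 / (1 + (A0 r) ^ 2)))
      = ((2 * a) ^ 2 / 4) * (3 - (3 / b) * Real.arctan b - Real.log (1 + b ^ 2)
          + (4 * b ^ 2 / (2 * a) ^ 2) * (1 + (m : ℝ) ^ 2 * (2 * Real.log 2 - 1))) := by
  obtain rfl : A0 = tent (b / a) a := funext hA0
  set c := b / a
  have hc : c ≠ 0 := by positivity
  have hca : c * a = b := div_mul_cancel₀ b ha.ne'
  set V : ℝ → ℝ := fun x => x ^ 2 / (1 + x ^ 2) - Real.log (1 + x ^ 2)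
  have hV : Continuous V := by fun_prop (disch := intro; positivity)
  have hae : ∀ᵐ r, r ∈ uIoc 0 (2 * a) →
      r * deriv (tent c a) r ^ 2 + ((m : ℝ) ^ 2 / r) * tent c a r ^ 2
        - r * Real.log (1 + tent c a r ^ 2) + r * tent c a r ^ 2 / (1 + tent c a r ^ 2)
      = c ^ 2 * r + (m : ℝ) ^ 2 * (tent c a r ^ 2 / r) + r * V (tent c a r) := by
    filter_upwards [volume.ae_ne a] with r hr _
    rw [tent.deriv_sq hr]
    ring
  have hint₁ : IntervalIntegrable (fun r => c ^ 2 * r) volume 0 (2 * a) :=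
    (continuous_const_mul _).intervalIntegrable _ _
  have hint₂ := (intervalIntegrable_tent_sq_div c ha).const_mul ((m : ℝ) ^ 2)
  have hint₃ : IntervalIntegrable (fun r => r * V (tent c a r)) volume 0 (2 * a) :=
    Continuous.intervalIntegrable (by fun_prop) _ _
  rw [← integral_Ioc_eq_integral_Ioo, ← intervalIntegral.integral_of_le (by positivity),
    intervalIntegral.integral_congr_ae hae, intervalIntegral.integral_add (hint₁.add hint₂) hint₃,
    intervalIntegral.integral_add hint₁ hint₂, intervalIntegral.integral_const_mul,
    intervalIntegral.integral_const_mul, integral_id, integral_tent_sq_div c ha,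
    integral_mul_comp_tent hV c ha.le, integral_comp_mul_left _ hc, smul_eq_mul, mul_zero, hca,
    integral_sq_div_one_add_sq_sub_log]
  simp only [c]
  field_simp
  ring
end
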